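/- Let x = (x_n)_{n≥2} and y = (y_n)_{n≥2} be sequences with x_n, y_n ∈ {1,…,n}. Suppose there exist a metric space Z and isometric embeddings i : N_x → Z and j : N_y → Z such that the Hausdorff distance (in Z) between i(N_x) and j(N_y) is finite. Then sup_{n≥2} |x_n − y_n| < ∞. (Together with the converse bound, this realizes the continuous reduction of E_{K_σ} to the Gromov–Hausdorff relation of being at finite Gromov–Hausdorff distance.) -/
import Mathlib
set_option maxHeartbeats 400000


noncomputable section

/-- The tree distance on `ℝ²`. -/
def treeDist (p q : ℝ × ℝ) : ℝ :=
  if p.1 = q.1 then |p.2 - q.2| else |p.2| + |p.1 - q.1| + |q.2|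

/-- `∑_{i=2}^n e^{i²}`. -/
def expSum (n : ℕ) : ℝ := ∑ i ∈ Finset.Icc 2 n, Real.exp ((i : ℝ) ^ 2)

/-- `Q⁺_{x,n} = (∑_{i=2}^n e^{i²}, x_n)`. -/
def Qp (x : ℕ → ℕ) (n : ℕ) : ℝ × ℝ := (expSum n, (x n : ℝ))

/-- `Q⁻_{x,n} = (∑_{i=2}^n e^{i²}, −x_n)`. -/
def Qm (x : ℕ → ℕ) (n : ℕ) : ℝ × ℝ := (expSum n, -(x n : ℝ))

/-- `N_x = ⋃_{n≥2} {Q⁺_{x,n}, Q⁻_{x,n}}`. -/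
def Nset (x : ℕ → ℕ) : Set (ℝ × ℝ) := ⋃ n ∈ {m : ℕ | 2 ≤ m}, ({Qp x n, Qm x n} : Set (ℝ × ℝ))

/-- `x = (x_n)_{n≥2}` is a sequence with `x_n ∈ {1,…,n}`. -/
def SeqOK (x : ℕ → ℕ) : Prop := ∀ n, 2 ≤ n → 1 ≤ x n ∧ x n ≤ n

lemma expSum_nonneg (n : ℕ) : 0 ≤ expSum n :=
  Finset.sum_nonneg fun _ _ => (Real.exp_pos _).le

lemma expSum_mono : Monotone expSum := fun a b h =>
  Finset.sum_le_sum_of_subset_of_nonneg (Finset.Icc_subset_Icc_right h)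
    (fun _ _ _ => (Real.exp_pos _).le)

lemma expSum_gap {m n : ℕ} (h2 : 2 ≤ n) (h : m < n) :
    expSum m + Real.exp ((n : ℝ) ^ 2) ≤ expSum n := by
  have h1 : expSum (n - 1) + Real.exp ((n : ℝ) ^ 2) = expSum n := by
    have hn : n - 1 + 1 = n := by omega
    unfold expSum
    rw [← hn, Finset.sum_Icc_succ_top (by omega : 2 ≤ n - 1 + 1)]
    simp
  have h2 : expSum m ≤ expSum (n - 1) := expSum_mono (by omega)
  linarith

lemma expSum_inj {m n : ℕ} (hm : 2 ≤ m) (hn : 2 ≤ n) (h : expSum m = expSum n) : m = n := by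
  rcases lt_trichotomy m n with hlt | he | hgt
  · have := expSum_gap hn hlt
    have := Real.exp_pos ((n : ℝ) ^ 2)
    linarith
  · exact he
  · have := expSum_gap hm hgt
    have := Real.exp_pos ((m : ℝ) ^ 2)
    linarith

lemma treeDist_le (p q : ℝ × ℝ) : treeDist p q ≤ |p.2| + |p.1 - q.1| + |q.2| := by
  unfold treeDist
  split
  · have h1 : |p.2 - q.2| ≤ |p.2| + |q.2| := by
      simpa [sub_eq_add_neg] using abs_add_le p.2 (-q.2)
    have := abs_nonneg (p.1 - q.1)
    linarith
  · exact le_refl _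

lemma le_treeDist (p q : ℝ × ℝ) : |p.1 - q.1| ≤ treeDist p q := by
  unfold treeDist
  split
  · rename_i h
    simp [h, abs_nonneg]
  · have := abs_nonneg p.2
    have := abs_nonneg q.2
    linarith

lemma treeDist_same_col {p q : ℝ × ℝ} (h : p.1 = q.1) : treeDist p q = |p.2 - q.2| := by
  simp [treeDist, h]

lemma Qp_mem {x : ℕ → ℕ} {n : ℕ} (hn : 2 ≤ n) : Qp x n ∈ Nset x := by
  simp only [Nset, Set.mem_iUnion, Set.mem_setOf_eq]
  exact ⟨n, hn, by simp⟩

lemma Qm_mem {x : ℕ → ℕ} {n : ℕ} (hn : 2 ≤ n) : Qm x n ∈ Nset x := by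
  simp only [Nset, Set.mem_iUnion, Set.mem_setOf_eq]
  exact ⟨n, hn, by simp⟩

lemma Nset_spec {x : ℕ → ℕ} {q : ℝ × ℝ} (hq : q ∈ Nset x) :
    ∃ m, 2 ≤ m ∧ q.1 = expSum m ∧ |q.2| = (x m : ℝ) ∧ (q = Qp x m ∨ q = Qm x m) := by
  simp only [Nset, Set.mem_iUnion, Set.mem_setOf_eq, Set.mem_insert_iff,
    Set.mem_singleton_iff] at hq
  obtain ⟨m, hm, hcase⟩ := hq
  refine ⟨m, hm, ?_, ?_, hcase⟩ <;> rcases hcase with h | h <;> simp [h, Qp, Qm, abs_of_nonneg]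

lemma Nset_fst_eq {y : ℕ → ℕ} {q : ℝ × ℝ} {n : ℕ} (hn : 2 ≤ n) (hq : q ∈ Nset y)
    (h1 : q.1 = expSum n) : q = Qp y n ∨ q = Qm y n := by
  obtain ⟨m, hm, hq1, _, hc⟩ := Nset_spec hq
  have : m = n := expSum_inj hm hn (by rw [← hq1, h1])
  subst this
  exact hc

lemma index_eq (x y : ℕ → ℕ) (hx : SeqOK x) (hy : SeqOK y)
    (Z : Type*) [MetricSpace Z] (i j : ℝ × ℝ → Z)
    (hi : ∀ p ∈ Nset x, ∀ q ∈ Nset x, dist (i p) (i q) = treeDist p q)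
    (hj : ∀ p ∈ Nset y, ∀ q ∈ Nset y, dist (j p) (j q) = treeDist p q)
    (r : ℝ) (hr : ∀ p ∈ Nset x, ∃ q ∈ Nset y, dist (i p) (j q) ≤ r) :
    ∃ N, 3 ≤ N ∧ ∀ n, N ≤ n → ∀ p ∈ Nset x, p.1 = expSum n →
      ∀ q ∈ Nset y, dist (i p) (j q) ≤ r → q.1 = expSum n := by
  obtain ⟨q₀, hq₀, hd₀⟩ := hr (Qp x 2) (Qp_mem le_rfl)
  obtain ⟨m₀, hm₀, hq₀1, hq₀2, _⟩ := Nset_spec hq₀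
  obtain ⟨K, hK⟩ : ∃ K : ℝ, K = 2 * r + expSum m₀ + (m₀ : ℝ) + expSum 2 + (x 2 : ℝ) + 1 :=
    ⟨_, rfl⟩
  refine ⟨max 3 (⌈K⌉₊ + 2), le_max_left _ _, ?_⟩
  intro n hn p hp hp1 q hq hdist
  have hn3 : 3 ≤ n := le_trans (le_max_left _ _) hn
  have hnK : K ≤ (n : ℝ) - 2 := by
    have h1 : ⌈K⌉₊ + 2 ≤ n := le_trans (le_max_right _ _) hn
    have h2 : K ≤ (⌈K⌉₊ : ℝ) := Nat.le_ceil K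
    have h3 : ((⌈K⌉₊ : ℕ) : ℝ) + 2 ≤ (n : ℝ) := by exact_mod_cast h1
    linarith
  obtain ⟨np, hnp, hpp1, hpp2, _⟩ := Nset_spec hp
  have hnpn : np = n := expSum_inj hnp (by omega) (by rw [← hpp1, hp1])
  rw [hnpn] at hpp2
  obtain ⟨m, hm, hq1, hq2, _⟩ := Nset_spec hq
  -- basic distance chain inequalities in Z
  have hp0 : Qp x 2 ∈ Nset x := Qp_mem le_rfl
  have hqq : dist (j q) (j q₀) = treeDist q q₀ := hj q hq q₀ hq₀
  have hpp : dist (i p) (i (Qp x 2)) = treeDist p (Qp x 2) := hi p hp _ hp0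
  have chain1 : treeDist q q₀ ≤ treeDist p (Qp x 2) + 2 * r := by
    have t1 : dist (j q) (j q₀) ≤ dist (j q) (i p) + dist (i p) (i (Qp x 2))
        + dist (i (Qp x 2)) (j q₀) := dist_triangle4 _ _ _ _
    rw [dist_comm (j q) (i p)] at t1
    rw [hqq, hpp] at t1
    linarith
  have chain2 : treeDist p (Qp x 2) ≤ treeDist q q₀ + 2 * r := by
    have t1 : dist (i p) (i (Qp x 2)) ≤ dist (i p) (j q) + dist (j q) (j q₀)
        + dist (j q₀) (i (Qp x 2)) := dist_triangle4 _ _ _ _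
    rw [dist_comm (j q₀) (i (Qp x 2))] at t1
    rw [hqq, hpp] at t1
    linarith
  -- numeric bounds
  have hx2 : (1:ℝ) ≤ (x 2 : ℝ) ∧ (x 2 : ℝ) ≤ 2 := by
    have := hx 2 le_rfl; exact ⟨by exact_mod_cast this.1, by exact_mod_cast this.2⟩
  have hxn : (x n : ℝ) ≤ (n : ℝ) := by exact_mod_cast (hx n (by omega)).2
  have hym : (y m : ℝ) ≤ (m : ℝ) := by exact_mod_cast (hy m hm).2
  have hym0 : (y m₀ : ℝ) ≤ (m₀ : ℝ) := by exact_mod_cast (hy m₀ hm₀).2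
  have hu2n : expSum 2 ≤ expSum n := expSum_mono (by omega)
  have hQp2 : (Qp x 2).1 = expSum 2 ∧ |(Qp x 2).2| = (x 2 : ℝ) := by
    constructor
    · rfl
    · simp [Qp, abs_of_nonneg]
  have htpp_ub : treeDist p (Qp x 2) ≤ (x n : ℝ) + (expSum n - expSum 2) + (x 2 : ℝ) := by
    have := treeDist_le p (Qp x 2)
    rw [hpp2, hQp2.1, hQp2.2, hp1] at this
    rwa [abs_of_nonneg (by linarith)] at this
  have htpp_lb : expSum n - expSum 2 ≤ treeDist p (Qp x 2) := by
    have := le_treeDist p (Qp x 2)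
    rw [hQp2.1, hp1] at this
    calc expSum n - expSum 2 ≤ |expSum n - expSum 2| := le_abs_self _
      _ ≤ _ := this
  have htqq_ub : treeDist q q₀ ≤ (y m : ℝ) + (expSum m + expSum m₀) + (y m₀ : ℝ) := by
    have h1 := treeDist_le q q₀
    rw [hq2, hq₀2, hq1, hq₀1] at h1
    have h2 : |expSum m - expSum m₀| ≤ expSum m + expSum m₀ := by
      rw [abs_sub_le_iff]
      constructor <;> [skip; skip] <;>
        (have := expSum_nonneg m; have := expSum_nonneg m₀; linarith)
    linarith
  have htqq_lb : expSum m - expSum m₀ ≤ treeDist q q₀ := by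
    have := le_treeDist q q₀
    rw [hq1, hq₀1] at this
    calc expSum m - expSum m₀ ≤ |expSum m - expSum m₀| := le_abs_self _
      _ ≤ _ := this
  -- m ≤ n
  have hmn : m ≤ n := by
    by_contra hc
    push_neg at hc
    have hgap : expSum n + Real.exp ((m : ℝ) ^ 2) ≤ expSum m := expSum_gap hm hc
    have hexp : (m : ℝ) ^ 2 + 1 ≤ Real.exp ((m : ℝ) ^ 2) := Real.add_one_le_exp _
    have hm2 : (n : ℝ) ^ 2 ≤ (m : ℝ) ^ 2 := by
      have h1 : (n : ℝ) ≤ (m : ℝ) := by exact_mod_cast hc.le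
      have h0 : (0:ℝ) ≤ (n : ℝ) := Nat.cast_nonneg n
      nlinarith
    have hnn : (n : ℝ) ^ 2 + 1 ≤ (n : ℝ) + K := by
      rw [hK]
      linarith [chain1, htqq_lb, hgap, hexp, hm2, htpp_ub, hxn, expSum_nonneg 2,
        Nat.cast_nonneg (α := ℝ) m₀]
    have hsq : (0:ℝ) ≤ ((n:ℝ) - 1) ^ 2 := sq_nonneg _
    have hring : ((n:ℝ) - 1) ^ 2 = (n:ℝ)^2 - 2*(n:ℝ) + 1 := by ring
    linarith
  -- n ≤ m
  have hnm : n ≤ m := by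
    by_contra hc
    push_neg at hc
    have hgap : expSum m + Real.exp ((n : ℝ) ^ 2) ≤ expSum n := expSum_gap (by omega) hc
    have hexp : (n : ℝ) ^ 2 + 1 ≤ Real.exp ((n : ℝ) ^ 2) := Real.add_one_le_exp _
    have hmn' : (m : ℝ) ≤ (n : ℝ) := by exact_mod_cast hc.le
    have hnn : (n : ℝ) ^ 2 + 1 ≤ (n : ℝ) + K := by
      rw [hK]
      linarith [htpp_lb, chain2, htqq_ub, hgap, hexp, hym, hym0, hmn', hx2.1]
    have hsq : (0:ℝ) ≤ ((n:ℝ) - 1) ^ 2 := sq_nonneg _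
    have hring : ((n:ℝ) - 1) ^ 2 = (n:ℝ)^2 - 2*(n:ℝ) + 1 := by ring
    linarith
  have : m = n := le_antisymm hmn hnm
  rw [hq1, this]

lemma diff_le_of_match (x y : ℕ → ℕ) (hx : SeqOK x) (hy : SeqOK y)
    (Z : Type*) [MetricSpace Z] (i j : ℝ × ℝ → Z)
    (hi : ∀ p ∈ Nset x, ∀ q ∈ Nset x, dist (i p) (i q) = treeDist p q)
    (hj : ∀ p ∈ Nset y, ∀ q ∈ Nset y, dist (j p) (j q) = treeDist p q)
    (r : ℝ) (hr : ∀ p ∈ Nset x, ∃ q ∈ Nset y, dist (i p) (j q) ≤ r) :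
    ∃ N : ℕ, ∀ n, N ≤ n → (x n : ℝ) ≤ r ∨ |(x n : ℝ) - (y n : ℝ)| ≤ r := by
  obtain ⟨N, hN3, hN⟩ := index_eq x y hx hy Z i j hi hj r hr
  refine ⟨N, fun n hn => ?_⟩
  have hn2 : 2 ≤ n := by omega
  obtain ⟨qp, hqp, hdp⟩ := hr (Qp x n) (Qp_mem hn2)
  obtain ⟨qm, hqm, hdm⟩ := hr (Qm x n) (Qm_mem hn2)
  have hqp1 : qp.1 = expSum n := hN n hn (Qp x n) (Qp_mem hn2) rfl qp hqp hdp
  have hqm1 : qm.1 = expSum n := hN n hn (Qm x n) (Qm_mem hn2) rfl qm hqm hdm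
  have hcp := Nset_fst_eq hn2 hqp hqp1
  have hcm := Nset_fst_eq hn2 hqm hqm1
  have hxnn : (0:ℝ) ≤ (x n : ℝ) := Nat.cast_nonneg _
  have hynn : (0:ℝ) ≤ (y n : ℝ) := Nat.cast_nonneg _
  have hiQ : dist (i (Qp x n)) (i (Qm x n)) = 2 * (x n : ℝ) := by
    rw [hi _ (Qp_mem hn2) _ (Qm_mem hn2),
      treeDist_same_col (p := Qp x n) (q := Qm x n) rfl]
    have h1 : (Qp x n).2 - (Qm x n).2 = 2 * (x n : ℝ) := by simp [Qp, Qm]; ring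
    rw [h1, abs_of_nonneg (by linarith)]
  have hjQ : dist (j qp) (j qm) = |qp.2 - qm.2| := by
    rw [hj _ hqp _ hqm, treeDist_same_col (by rw [hqp1, hqm1])]
  have t1 : dist (i (Qp x n)) (i (Qm x n)) ≤ dist (i (Qp x n)) (j qp)
      + dist (j qp) (j qm) + dist (j qm) (i (Qm x n)) := dist_triangle4 _ _ _ _
  have t2 : dist (j qp) (j qm) ≤ dist (j qp) (i (Qp x n))
      + dist (i (Qp x n)) (i (Qm x n)) + dist (i (Qm x n)) (j qm) := dist_triangle4 _ _ _ _
  rw [dist_comm (j qm) (i (Qm x n))] at t1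
  rw [dist_comm (j qp) (i (Qp x n))] at t2
  rw [hiQ, hjQ] at t1 t2
  have hmix : |(Qp y n).2 - (Qm y n).2| = 2 * (y n : ℝ) := by
    simp only [Qp, Qm, sub_neg_eq_add]
    rw [abs_of_nonneg (by linarith)]
    ring
  have hD : |qp.2 - qm.2| = 0 ∨ |qp.2 - qm.2| = 2 * (y n : ℝ) := by
    rcases hcp with h1 | h1 <;> rcases hcm with h2 | h2 <;> rw [h1, h2]
    · left; simp
    · right; exact hmix
    · right; rw [abs_sub_comm]; exact hmix
    · left; simp
  rcases hD with hD | hD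
  · left; rw [hD] at t1; linarith
  · right
    rw [hD] at t1 t2
    rw [abs_sub_le_iff]
    constructor <;> linarith

/-- If `N_x` and `N_y` admit isometric embeddings into a common metric space `Z`
whose images are at finite Hausdorff distance, then `sup_{n≥2} |x_n − y_n| < ∞`.
Together with the converse bound, this realizes the continuous reduction of
`E_{K_σ}` to the relation of being at finite Gromov–Hausdorff distance. -/
theorem bounded_diff_of_finite_hausdorffDist (x y : ℕ → ℕ) (hx : SeqOK x) (hy : SeqOK y)
    (Z : Type*) [MetricSpace Z] (i j : ℝ × ℝ → Z)
    (hi : ∀ p ∈ Nset x, ∀ q ∈ Nset x, dist (i p) (i q) = treeDist p q)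
    (hj : ∀ p ∈ Nset y, ∀ q ∈ Nset y, dist (j p) (j q) = treeDist p q)
    (hH : EMetric.hausdorffEdist (i '' Nset x) (j '' Nset y) ≠ ⊤) :
    ∃ C : ℝ, ∀ n, 2 ≤ n → |(x n : ℝ) - (y n : ℝ)| ≤ C := by
  set H := EMetric.hausdorffEdist (i '' Nset x) (j '' Nset y) with hHdef
  set r : ℝ := H.toReal + 1 with hrdef
  have hr1 : (1:ℝ) ≤ r := by
    have := ENNReal.toReal_nonneg (a := H); linarith
  have key : ∀ (s t : Set (ℝ × ℝ)) (f g : ℝ × ℝ → Z),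
      EMetric.hausdorffEdist (f '' s) (g '' t) = H →
      ∀ p ∈ s, ∃ q ∈ t, dist (f p) (g q) ≤ r := by
    intro s t f g hfg p hp
    have h1 : EMetric.infEdist (f p) (g '' t) ≤ H := by
      rw [← hfg]
      exact EMetric.infEdist_le_hausdorffEdist_of_mem (Set.mem_image_of_mem f hp)
    have h2 : EMetric.infEdist (f p) (g '' t) < H + 1 :=
      lt_of_le_of_lt h1 (ENNReal.lt_add_right hH one_ne_zero)
    obtain ⟨z, hz, hlt⟩ := EMetric.infEdist_lt_iff.mp h2
    obtain ⟨q, hq, rfl⟩ := hz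
    refine ⟨q, hq, ?_⟩
    have h3 : edist (f p) (g q) ≤ H + 1 := hlt.le
    have h4 : dist (f p) (g q) = (edist (f p) (g q)).toReal := dist_edist _ _
    rw [h4, hrdef]
    calc (edist (f p) (g q)).toReal ≤ (H + 1).toReal :=
          ENNReal.toReal_mono (by simp [hH]) h3
      _ = H.toReal + 1 := by rw [ENNReal.toReal_add hH ENNReal.one_ne_top, ENNReal.toReal_one]
  have hrxy : ∀ p ∈ Nset x, ∃ q ∈ Nset y, dist (i p) (j q) ≤ r :=
    key (Nset x) (Nset y) i j rfl
  have hryx : ∀ p ∈ Nset y, ∃ q ∈ Nset x, dist (j p) (i q) ≤ r :=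
    key (Nset y) (Nset x) j i (EMetric.hausdorffEdist_comm ..)
  obtain ⟨N₁, hN₁⟩ := diff_le_of_match x y hx hy Z i j hi hj r hrxy
  obtain ⟨N₂, hN₂⟩ := diff_le_of_match y x hy hx Z j i hj hi r hryx
  refine ⟨max r ((max N₁ N₂ : ℕ) : ℝ), fun n hn2 => ?_⟩
  have hx1 : (1:ℝ) ≤ (x n : ℝ) := by exact_mod_cast (hx n hn2).1
  have hy1 : (1:ℝ) ≤ (y n : ℝ) := by exact_mod_cast (hy n hn2).1
  have hxn : (x n : ℝ) ≤ (n : ℝ) := by exact_mod_cast (hx n hn2).2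
  have hyn : (y n : ℝ) ≤ (n : ℝ) := by exact_mod_cast (hy n hn2).2
  by_cases hcase : max N₁ N₂ ≤ n
  · have hA := hN₁ n (le_trans (le_max_left _ _) hcase)
    have hB := hN₂ n (le_trans (le_max_right _ _) hcase)
    have goal : |(x n : ℝ) - (y n : ℝ)| ≤ r := by
      rcases hA with hA | hA
      · rcases hB with hB | hB
        · rw [abs_sub_le_iff]; constructor <;> linarith
        · rw [abs_sub_comm]; exact hB
      · exact hA
    exact le_trans goal (le_max_left _ _)
  · push_neg at hcase
    have hnm : (n : ℝ) ≤ ((max N₁ N₂ : ℕ) : ℝ) := by exact_mod_cast hcase.le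
    have goal : |(x n : ℝ) - (y n : ℝ)| ≤ ((max N₁ N₂ : ℕ) : ℝ) := by
      rw [abs_sub_le_iff]; constructor <;> linarith
    exact le_trans goal (le_max_right _ _)
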